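/- arXiv:0905.0762 — 2 statements merged into one kernel-verified Lean document; each statement's English description precedes it below -/
import Mathlib

section
/- In the untyped symmetric λμ-calculus with the βμμ′-reduction: (1) if (M N) ▷* λx P, then M ▷* λy M₁ for some M₁ with M₁[y:=N] ▷* λx P; (2) if (M N) ▷* μα P, then either M ▷* λy M₁ with M₁[y:=N] ▷* μα P, or M ▷* μα M₁ with M₁[α=_r N] ▷* P, or N ▷* μα N₁ with N₁[α=_l M] ▷* P. -/
namespace SymLM

/-- Terms of the symmetric λμ-calculus :
T ::= x | λx T | (T T) | μα T | (α T).
λ-variables and μ-variables are two disjoint namespaces, both indexed by ℕ. -/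
inductive Lam : Type
| var : ℕ → Lam          -- λ-variable x
| lam : ℕ → Lam → Lam    -- λx M (binds the λ-variable x)
| app : Lam → Lam → Lam  -- (M N)
| mu  : ℕ → Lam → Lam    -- μα M (binds the μ-variable α)
| name : ℕ → Lam → Lam   -- (α M)

/-- β-substitution M[x:=N] of a term for a λ-variable. -/
def subst : Lam → ℕ → Lam → Lam
| .var y, x, N => if y = x then N else .var y
| .lam y M, x, N => if y = x then .lam y M else .lam y (subst M x N)
| .app M P, x, N => .app (subst M x N) (subst P x N)
| .mu b M, x, N => .mu b (subst M x N)
| .name b M, x, N => .name b (subst M x N)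

/-- Direction of a μμ′-substitution: `r` for [α=_r N], `l` for [α=_l N]. -/
inductive Dir : Type
| l | r

/-- μμ′-substitution: `msubst M α .r N` is M[α=_r N], obtained by replacing each
subterm (α U) of M by (α (U N)); `msubst M α .l N` is M[α=_l N], replacing (α U)
by (α (N U)). -/
def msubst : Lam → ℕ → Dir → Lam → Lam
| .var y, _, _, _ => .var y
| .lam y M, a, d, N => .lam y (msubst M a d N)
| .app M P, a, d, N => .app (msubst M a d N) (msubst P a d N)
| .mu b M, a, d, N => if b = a then .mu b M else .mu b (msubst M a d N)
| .name b M, a, d, N =>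
    if b = a then
      match d with
      | .r => .name b (.app (msubst M a d N) N)
      | .l => .name b (.app N (msubst M a d N))
    else .name b (msubst M a d N)

/-- Simultaneous μμ′-substitution for a partial assignment σ of directions and
terms to μ-variables. -/
def smsubst : (ℕ → Option (Dir × Lam)) → Lam → Lam
| _, .var y => .var y
| σ, .lam y M => .lam y (smsubst σ M)
| σ, .app M P => .app (smsubst σ M) (smsubst σ P)
| σ, .mu b M => .mu b (smsubst (fun c => if c = b then none else σ c) M)
| σ, .name b M =>
    match σ b with
    | some (.r, N) => .name b (.app (smsubst σ M) N)
    | some (.l, N) => .name b (.app N (smsubst σ M))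
    | none => .name b (smsubst σ M)

/-- The simultaneous μμ′-substitution [α₁=_{s₁}P₁, ..., α_n=_{s_n}P_n] given as a
finite list of bindings. -/
def applyM (σ : List (ℕ × Dir × Lam)) (M : Lam) : Lam :=
  smsubst (fun a => σ.lookup a) M

/-- Simultaneous β-substitution for a partial assignment σ of terms to λ-variables. -/
def ssubst : (ℕ → Option Lam) → Lam → Lam
| σ, .var y => (σ y).getD (.var y)
| σ, .lam y M => .lam y (ssubst (fun z => if z = y then none else σ z) M)
| σ, .app M P => .app (ssubst σ M) (ssubst σ P)
| σ, .mu b M => .mu b (ssubst σ M)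
| σ, .name b M => .name b (ssubst σ M)

/-- The simultaneous β-substitution [x₁:=N₁, ..., x_k:=N_k] given as a finite list
of bindings. -/
def applyS (σ : List (ℕ × Lam)) (M : Lam) : Lam :=
  ssubst (fun x => σ.lookup x) M

/-- The iterated application (M P₁ ... P_n). -/
def appList (M : Lam) (l : List Lam) : Lam := l.foldl .app M

/-- Root rule (β) : (λx M N) ▷ M[x:=N]. -/
inductive BetaR : Lam → Lam → Prop
| mk (x : ℕ) (M N : Lam) : BetaR (.app (.lam x M) N) (subst M x N)

/-- Root rule (μ) : (μα M N) ▷ μα M[α=_r N]. -/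
inductive MuR : Lam → Lam → Prop
| mk (α : ℕ) (M N : Lam) : MuR (.app (.mu α M) N) (.mu α (msubst M α .r N))

/-- Root rule (μ′) : (N μα M) ▷ μα M[α=_l N]. -/
inductive MuPR : Lam → Lam → Prop
| mk (α : ℕ) (M N : Lam) : MuPR (.app N (.mu α M)) (.mu α (msubst M α .l N))

/-- One-step reduction: closure of a set `R` of root rules under all contexts. -/
inductive Step (R : Lam → Lam → Prop) : Lam → Lam → Prop
| base {M M'} : R M M' → Step R M M'
| appL {M M' N} : Step R M M' → Step R (.app M N) (.app M' N)
| appR {M N N'} : Step R N N' → Step R (.app M N) (.app M N')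
| lam {x M M'} : Step R M M' → Step R (.lam x M) (.lam x M')
| mu {α M M'} : Step R M M' → Step R (.mu α M) (.mu α M')
| name {α M M'} : Step R M M' → Step R (.name α M) (.name α M')

/-- The root rules of the μμ′-reduction. -/
def mmR : Lam → Lam → Prop := fun M N => MuR M N ∨ MuPR M N

/-- The root rules of the βμμ′-reduction. -/
def bmmR : Lam → Lam → Prop := fun M N => BetaR M N ∨ MuR M N ∨ MuPR M N

/-- `a` is strongly normalizing for the reduction `r` : no infinite `r`-reduction
sequence starts from `a` (accessibility for the reversed relation). -/
def SN {α : Type} (r : α → α → Prop) (a : α) : Prop :=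
  Acc (fun x y => r y x) a

/-- Types of the simply typed symmetric λμ-calculus: atoms, ⊥ and A → B. -/
inductive Ty : Type
| atom : ℕ → Ty
| bot : Ty
| arrow : Ty → Ty → Ty

/-- ¬A abbreviates A → ⊥. -/
def Ty.neg (A : Ty) : Ty := Ty.arrow A Ty.bot

/-- Typing judgment Γ ⊢ M : A.  The context is given by `Γ : ℕ → Ty` for the
λ-variables and `Δ : ℕ → Ty` for the μ-variables, where `Δ α = A` means that the
declaration α : ¬A occurs in the context. -/
inductive Typed : (ℕ → Ty) → (ℕ → Ty) → Lam → Ty → Prop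
| var {Γ Δ x A} : Γ x = A → Typed Γ Δ (.var x) A
| lam {Γ Δ x M A B} : Typed (Function.update Γ x A) Δ M B →
    Typed Γ Δ (.lam x M) (.arrow A B)
| app {Γ Δ M N A B} : Typed Γ Δ M (.arrow A B) → Typed Γ Δ N A →
    Typed Γ Δ (.app M N) B
| mu {Γ Δ α M A} : Typed Γ (Function.update Δ α A) M .bot →
    Typed Γ Δ (.mu α M) A
| name {Γ Δ α M A} : Typed Γ Δ M A → Δ α = A → Typed Γ Δ (.name α M) .bot

section Aux

open Relation

local notation:50 M " ▷* " N => Relation.ReflTransGen (Step bmmR) M N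

lemma rtg_appL {M M' N : Lam} (h : M ▷* M') : (.app M N) ▷* (.app M' N) := by
  induction h with
  | refl => exact .refl
  | tail _ s ih => exact ih.tail (Step.appL s)

lemma rtg_appR {M N N' : Lam} (h : N ▷* N') : (.app M N) ▷* (.app M N') := by
  induction h with
  | refl => exact .refl
  | tail _ s ih => exact ih.tail (Step.appR s)

lemma rtg_name {a : ℕ} {M M' : Lam} (h : M ▷* M') : (.name a M) ▷* (.name a M') := by
  induction h with
  | refl => exact .refl
  | tail _ s ih => exact ih.tail (Step.name s)

lemma rtg_lam {x : ℕ} {M M' : Lam} (h : M ▷* M') : (.lam x M) ▷* (.lam x M') := by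
  induction h with
  | refl => exact .refl
  | tail _ s ih => exact ih.tail (Step.lam s)

lemma rtg_mu {a : ℕ} {M M' : Lam} (h : M ▷* M') : (.mu a M) ▷* (.mu a M') := by
  induction h with
  | refl => exact .refl
  | tail _ s ih => exact ih.tail (Step.mu s)

/-- Reducts of a μ-headed term are μ-headed with the same binder. -/
lemma mu_red {a : ℕ} {Q T : Lam} (h : (Lam.mu a Q) ▷* T) :
    ∃ Q', T = .mu a Q' ∧ (Q ▷* Q') := by
  induction h with
  | refl => exact ⟨Q, rfl, .refl⟩
  | tail _ s ih =>
      obtain ⟨Q', rfl, hQ⟩ := ih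
      cases s with
      | base r =>
          rcases r with r | r | r
          · cases r
          · cases r
          · cases r
      | mu s => exact ⟨_, rfl, hQ.tail s⟩

lemma subst_arg_red {y : ℕ} {N N' : Lam} (h : Step bmmR N N') (M : Lam) :
    (subst M y N) ▷* (subst M y N') := by
  induction M with
  | var z =>
      simp only [subst]
      split
      · exact ReflTransGen.single h
      · exact .refl
  | lam z M ih =>
      simp only [subst]
      split
      · exact .refl
      · exact rtg_lam ih
  | app M P ihM ihP => exact (rtg_appL ihM).trans (rtg_appR ihP)
  | mu b M ih => exact rtg_mu ih
  | name b M ih => exact rtg_name ih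

lemma msubst_arg_red {a : ℕ} {d : Dir} {N N' : Lam} (h : Step bmmR N N') (M : Lam) :
    (msubst M a d N) ▷* (msubst M a d N') := by
  induction M with
  | var z => exact .refl
  | lam z M ih => exact rtg_lam ih
  | app M P ihM ihP => exact (rtg_appL ihM).trans (rtg_appR ihP)
  | mu b M ih =>
      simp only [msubst]
      split
      · exact .refl
      · exact rtg_mu ih
  | name b M ih =>
      simp only [msubst]
      split
      · cases d
        · exact rtg_name ((rtg_appL (ReflTransGen.single h)).trans (rtg_appR ih))
        · exact rtg_name ((rtg_appL ih).trans (rtg_appR (ReflTransGen.single h)))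
      · exact rtg_name ih

/-- Part (1), generalized for induction. -/
lemma main1 {P : Lam} {x : ℕ} :
    ∀ {S : Lam}, (S ▷* (.lam x P)) → ∀ M N, S = .app M N →
      ∃ (y : ℕ) (M₁ : Lam), (M ▷* (.lam y M₁)) ∧ ((subst M₁ y N) ▷* (.lam x P)) := by
  intro S h
  induction h using Relation.ReflTransGen.head_induction_on with
  | refl => intro M N hMN; exact absurd hMN (by simp)
  | head s h ih =>
      intro M N hMN
      subst hMN
      cases s with
      | base r =>
          rcases r with r | r | r
          · cases r with
            | mk y M₁ N => exact ⟨y, M₁, .refl, h⟩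
          · cases r with
            | mk a M₁ N =>
                obtain ⟨Q, hQ, _⟩ := mu_red h
                cases hQ
          · cases r with
            | mk a N₁ M =>
                obtain ⟨Q, hQ, _⟩ := mu_red h
                cases hQ
      | appL s =>
          obtain ⟨y, M₁, h1, h2⟩ := ih _ _ rfl
          exact ⟨y, M₁, (ReflTransGen.single s).trans h1, h2⟩
      | appR s =>
          obtain ⟨y, M₁, h1, h2⟩ := ih _ _ rfl
          exact ⟨y, M₁, h1, (subst_arg_red s M₁).trans h2⟩

/-- Part (2), generalized for induction. -/
lemma main2 {P : Lam} {α : ℕ} :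
    ∀ {S : Lam}, (S ▷* (.mu α P)) → ∀ M N, S = .app M N →
      (∃ (y : ℕ) (M₁ : Lam), (M ▷* (.lam y M₁)) ∧ ((subst M₁ y N) ▷* (.mu α P))) ∨
      (∃ M₁ : Lam, (M ▷* (.mu α M₁)) ∧ ((msubst M₁ α .r N) ▷* P)) ∨
      (∃ N₁ : Lam, (N ▷* (.mu α N₁)) ∧ ((msubst N₁ α .l M) ▷* P)) := by
  intro S h
  induction h using Relation.ReflTransGen.head_induction_on with
  | refl => intro M N hMN; exact absurd hMN (by simp)
  | head s h ih =>
      intro M N hMN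
      subst hMN
      cases s with
      | base r =>
          rcases r with r | r | r
          · cases r with
            | mk y M₁ N => exact .inl ⟨y, M₁, .refl, h⟩
          · cases r with
            | mk a M₁ N =>
                obtain ⟨Q, hQ, hred⟩ := mu_red h
                injection hQ with h1 h2
                subst h1; subst h2
                exact .inr (.inl ⟨M₁, .refl, hred⟩)
          · cases r with
            | mk a N₁ M =>
                obtain ⟨Q, hQ, hred⟩ := mu_red h
                injection hQ with h1 h2
                subst h1; subst h2
                exact .inr (.inr ⟨N₁, .refl, hred⟩)
      | appL s =>
          rcases ih _ _ rfl with ⟨y, M₁, h1, h2⟩ | ⟨M₁, h1, h2⟩ | ⟨N₁, h1, h2⟩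
          · exact .inl ⟨y, M₁, (ReflTransGen.single s).trans h1, h2⟩
          · exact .inr (.inl ⟨M₁, (ReflTransGen.single s).trans h1, h2⟩)
          · exact .inr (.inr ⟨N₁, h1, (msubst_arg_red s N₁).trans h2⟩)
      | appR s =>
          rcases ih _ _ rfl with ⟨y, M₁, h1, h2⟩ | ⟨M₁, h1, h2⟩ | ⟨N₁, h1, h2⟩
          · exact .inl ⟨y, M₁, h1, (subst_arg_red s M₁).trans h2⟩
          · exact .inr (.inl ⟨M₁, h1, (msubst_arg_red s M₁).trans h2⟩)
          · exact .inr (.inr ⟨N₁, (ReflTransGen.single s).trans h1, h2⟩)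

end Aux

/-- with the βμμ′-reduction, (1) if (M N) ▷* λx P then M ▷* λy M₁ with
M₁[y:=N] ▷* λx P; (2) if (M N) ▷* μα P then either M ▷* λy M₁ with M₁[y:=N] ▷* μα P,
or M ▷* μα M₁ with M₁[α=_r N] ▷* P, or N ▷* μα N₁ with N₁[α=_l M] ▷* P. -/
theorem app_red_to_lam_or_mu :
    (∀ (M N P : Lam) (x : ℕ),
      Relation.ReflTransGen (Step bmmR) (.app M N) (.lam x P) →
      ∃ (y : ℕ) (M₁ : Lam), Relation.ReflTransGen (Step bmmR) M (.lam y M₁) ∧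
        Relation.ReflTransGen (Step bmmR) (subst M₁ y N) (.lam x P)) ∧
    (∀ (M N P : Lam) (α : ℕ),
      Relation.ReflTransGen (Step bmmR) (.app M N) (.mu α P) →
      (∃ (y : ℕ) (M₁ : Lam), Relation.ReflTransGen (Step bmmR) M (.lam y M₁) ∧
        Relation.ReflTransGen (Step bmmR) (subst M₁ y N) (.mu α P)) ∨
      (∃ M₁ : Lam, Relation.ReflTransGen (Step bmmR) M (.mu α M₁) ∧
        Relation.ReflTransGen (Step bmmR) (msubst M₁ α .r N) P) ∨
      (∃ N₁ : Lam, Relation.ReflTransGen (Step bmmR) N (.mu α N₁) ∧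
        Relation.ReflTransGen (Step bmmR) (msubst N₁ α .l M) P)) := by
  exact ⟨fun M N P x h => main1 h M N rfl, fun M N P α h => main2 h M N rfl⟩

end SymLM
end

section
/- In the untyped symmetric λμ-calculus with the βμμ′-reduction: if M and N are strongly normalizing but the application (M N) is not strongly normalizing, then either M ▷* λy P with P[y:=N] not strongly normalizing, or M ▷* μα P with P[α=_r N] not strongly normalizing, or N ▷* μα P with P[α=_l M] not strongly normalizing. -/
namespace SymLM

/-!
Induction on the strong normalizability of `M` and then of `N`. A non-SN term has a non-SN
one-step reduct. If the first step of `(M N)` contracts the root redex, its contractum is the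
non-SN term of one of the three cases (μα T is SN as soon as T is). Otherwise the step happens
inside `M` or `N`, the induction hypothesis applies to the reduct, and its answer transfers back
to `(M N)` because both kinds of substitution are monotone in the substituted term.
-/

open Relation

theorem exists_not_SN_of_not_SN {α : Type} {r : α → α → Prop} {a : α} (h : ¬ SN r a) :
    ∃ b, r a b ∧ ¬ SN r b := by
  by_contra! hc
  exact h ⟨a, hc⟩

theorem not_SN_of_reflTransGen {α : Type} {r : α → α → Prop} {a b : α}
    (hab : ReflTransGen r a b) (hb : ¬ SN r b) : ¬ SN r a := fun ha => by
  induction hab with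
  | refl => exact hb ha
  | tail _ hstep ih => exact ih fun hc => hb (hc.inv hstep)

theorem SN_mu {a : ℕ} {Q : Lam} (h : SN (Step bmmR) Q) : SN (Step bmmR) (.mu a Q) := by
  induction h with
  | intro Q _ ih =>
    refine ⟨_, fun b hb => ?_⟩
    cases hb with
    | base hr => rcases hr with h | h | h <;> cases h
    | mu hs => exact ih _ hs

section Congruence

variable {R : Lam → Lam → Prop}

theorem reflTransGen_app {M M' N N' : Lam} (hM : ReflTransGen (Step R) M M')
    (hN : ReflTransGen (Step R) N N') : ReflTransGen (Step R) (.app M N) (.app M' N') :=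
  (hM.lift (Lam.app · N) fun _ _ => Step.appL).trans (hN.lift (Lam.app M' ·) fun _ _ => Step.appR)

theorem reflTransGen_lam {x : ℕ} {M M' : Lam} (h : ReflTransGen (Step R) M M') :
    ReflTransGen (Step R) (.lam x M) (.lam x M') :=
  h.lift (Lam.lam x ·) fun _ _ => Step.lam

theorem reflTransGen_mu {α : ℕ} {M M' : Lam} (h : ReflTransGen (Step R) M M') :
    ReflTransGen (Step R) (.mu α M) (.mu α M') :=
  h.lift (Lam.mu α ·) fun _ _ => Step.mu

theorem reflTransGen_name {α : ℕ} {M M' : Lam} (h : ReflTransGen (Step R) M M') :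
    ReflTransGen (Step R) (.name α M) (.name α M') :=
  h.lift (Lam.name α ·) fun _ _ => Step.name

theorem reflTransGen_subst (P : Lam) (x : ℕ) {N N' : Lam} (h : ReflTransGen (Step R) N N') :
    ReflTransGen (Step R) (subst P x N) (subst P x N') := by
  induction P with
  | var y =>
    unfold subst
    split
    · exact h
    · rfl
  | lam y P ih =>
    unfold subst
    split
    · rfl
    · exact reflTransGen_lam ih
  | app P Q ihP ihQ => exact reflTransGen_app ihP ihQ
  | mu b P ih => exact reflTransGen_mu ih
  | name b P ih => exact reflTransGen_name ih

theorem reflTransGen_msubst (P : Lam) (α : ℕ) (d : Dir) {N N' : Lam}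
    (h : ReflTransGen (Step R) N N') :
    ReflTransGen (Step R) (msubst P α d N) (msubst P α d N') := by
  induction P with
  | var y => rfl
  | lam y P ih => exact reflTransGen_lam ih
  | app P Q ihP ihQ => exact reflTransGen_app ihP ihQ
  | mu b P ih =>
    unfold msubst
    split
    · rfl
    · exact reflTransGen_mu ih
  | name b P ih =>
    unfold msubst
    split
    · cases d with
      | r => exact reflTransGen_name (reflTransGen_app ih h)
      | l => exact reflTransGen_name (reflTransGen_app h ih)
    · exact reflTransGen_name ih

end Congruence

def BadRedexReachable (M N : Lam) : Prop :=
  (∃ (y : ℕ) (P : Lam), ReflTransGen (Step bmmR) M (.lam y P) ∧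
    ¬ SN (Step bmmR) (subst P y N)) ∨
  (∃ (α : ℕ) (P : Lam), ReflTransGen (Step bmmR) M (.mu α P) ∧
    ¬ SN (Step bmmR) (msubst P α .r N)) ∨
  (∃ (α : ℕ) (P : Lam), ReflTransGen (Step bmmR) N (.mu α P) ∧
    ¬ SN (Step bmmR) (msubst P α .l M))

theorem badRedexReachable_of_root {M N b : Lam} (hr : bmmR (.app M N) b)
    (hb : ¬ SN (Step bmmR) b) : BadRedexReachable M N := by
  rcases hr with ⟨x, P, _⟩ | ⟨α, P, _⟩ | ⟨α, P, _⟩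
  · exact .inl ⟨x, P, .refl, hb⟩
  · exact .inr <| .inl ⟨α, P, .refl, fun h => hb (SN_mu h)⟩
  · exact .inr <| .inr ⟨α, P, .refl, fun h => hb (SN_mu h)⟩

theorem BadRedexReachable.of_reflTransGen_left {M M' N : Lam}
    (hM : ReflTransGen (Step bmmR) M M') (h : BadRedexReachable M' N) :
    BadRedexReachable M N := by
  rcases h with ⟨y, P, hr, hP⟩ | ⟨α, P, hr, hP⟩ | ⟨α, P, hr, hP⟩
  · exact .inl ⟨y, P, hM.trans hr, hP⟩
  · exact .inr <| .inl ⟨α, P, hM.trans hr, hP⟩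
  · exact .inr <| .inr ⟨α, P, hr, not_SN_of_reflTransGen (reflTransGen_msubst P α .l hM) hP⟩

theorem BadRedexReachable.of_reflTransGen_right {M N N' : Lam}
    (hN : ReflTransGen (Step bmmR) N N') (h : BadRedexReachable M N') :
    BadRedexReachable M N := by
  rcases h with ⟨y, P, hr, hP⟩ | ⟨α, P, hr, hP⟩ | ⟨α, P, hr, hP⟩
  · exact .inl ⟨y, P, hr, not_SN_of_reflTransGen (reflTransGen_subst P y hN) hP⟩
  · exact .inr <| .inl ⟨α, P, hr, not_SN_of_reflTransGen (reflTransGen_msubst P α .r hN) hP⟩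
  · exact .inr <| .inr ⟨α, P, hN.trans hr, hP⟩

/-- with the βμμ′-reduction, if M and N are SN but (M N) is not, then
either M ▷* λy P with P[y:=N] not SN, or M ▷* μα P with P[α=_r N] not SN, or
N ▷* μα P with P[α=_l M] not SN. -/
theorem app_not_SN_cases_beta :
    ∀ M N : Lam, SN (Step bmmR) M → SN (Step bmmR) N → ¬ SN (Step bmmR) (.app M N) →
      (∃ (y : ℕ) (P : Lam), Relation.ReflTransGen (Step bmmR) M (.lam y P) ∧
        ¬ SN (Step bmmR) (subst P y N)) ∨
      (∃ (α : ℕ) (P : Lam), Relation.ReflTransGen (Step bmmR) M (.mu α P) ∧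
        ¬ SN (Step bmmR) (msubst P α .r N)) ∨
      (∃ (α : ℕ) (P : Lam), Relation.ReflTransGen (Step bmmR) N (.mu α P) ∧
        ¬ SN (Step bmmR) (msubst P α .l M)) := by
  intro M N hM
  induction hM generalizing N with
  | intro M _ ihM =>
    intro hN
    induction hN with
    | intro N hNred ihN =>
      intro hMN
      obtain ⟨b, hstep, hb⟩ := exists_not_SN_of_not_SN hMN
      cases hstep with
      | base hr => exact badRedexReachable_of_root hr hb
      | appL hs =>
        exact BadRedexReachable.of_reflTransGen_left (.single hs) (ihM _ hs N ⟨N, hNred⟩ hb)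
      | appR hs =>
        exact BadRedexReachable.of_reflTransGen_right (.single hs) (ihN _ hs hb)

end SymLM
end
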